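/- arXiv:2006.12196 — 7 statements merged into one kernel-verified Lean document; each statement's English description precedes it below -/
import Mathlib

section
/- Let X and Y be independent random nodes each sampled from the distribution π. Then E[d_X*/d_Y*] = n* · Σ_{v_i∈V*} (d_i*/D*)², and consequently E[d_X*/d_Y*] / E[1{X = Y}] = n*. -/
/-! Since `(X, Y)` takes finitely many values, both expectations are finite sums against the
product law `π ⊗ π`. In `E[d_X*/d_Y*]` the weight `π(i) π(j)` times `d_i*/d_j*` is `π(i)²`,
independently of `j`, giving `n* Σ π(i)²`; the collision probability is the diagonal sum
`Σ π(i)²`, which is positive. -/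

open Finset MeasureTheory

section FiniteValued

variable {Ω ι κ : Type*} [MeasurableSpace Ω] {μ : Measure Ω} [IsFiniteMeasure μ]

theorem integral_comp_eq_sum_measureReal_preimage [Fintype ι] [MeasurableSpace ι]
    [MeasurableSingletonClass ι] {Z : Ω → ι} (hZ : Measurable Z) (g : ι → ℝ) :
    ∫ ω, g (Z ω) ∂μ = ∑ i, μ.real (Z ⁻¹' {i}) * g i := by
  rw [← integral_map hZ.aemeasurable (.of_discrete), integral_fintype (.of_finite)]
  simp_rw [map_measureReal_apply hZ (measurableSet_singleton _), smul_eq_mul]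

theorem integral_comp₂_eq_sum_measureReal [Fintype ι] [MeasurableSpace ι]
    [MeasurableSingletonClass ι] [Fintype κ] [MeasurableSpace κ]
    [MeasurableSingletonClass κ] {X : Ω → ι} {Y : Ω → κ} (hX : Measurable X)
    (hY : Measurable Y) (g : ι → κ → ℝ) :
    ∫ ω, g (X ω) (Y ω) ∂μ = ∑ i, ∑ j, μ.real {ω | X ω = i ∧ Y ω = j} * g i j := by
  rw [integral_comp_eq_sum_measureReal_preimage (hX.prodMk hY) (fun z => g z.1 z.2),
    Fintype.sum_prod_type]
  simp only [Set.preimage, Set.mem_singleton_iff, Prod.ext_iff]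

end FiniteValued

theorem sum_sum_mul_div_eq_card_mul_sum_sq {ι : Type*} [Fintype ι] (a : ι → ℝ)
    (ha : ∀ i, a i ≠ 0) (D : ℝ) :
    ∑ i, ∑ j, a i / D * (a j / D) * (a i / a j) = Fintype.card ι * ∑ i, (a i / D) ^ 2 := by
  have hterm : ∀ i j, a i / D * (a j / D) * (a i / a j) = (a i / D) ^ 2 := fun i j => by
    field_simp [ha j]
  simp only [hterm, sum_const, card_univ, nsmul_eq_mul, mul_sum]

theorem sum_sum_mul_ite_eq_sum_sq {ι : Type*} [Fintype ι] [DecidableEq ι] (p : ι → ℝ) :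
    ∑ i, ∑ j, p i * p j * (if i = j then 1 else 0) = ∑ i, p i ^ 2 := by
  simp [sq]

theorem stmt_6_general {m : ℕ} (dstar : Fin m → ℕ)
    (hds : ∀ i, 1 ≤ dstar i)
    {Ω : Type*} [MeasurableSpace Ω] (μ : Measure Ω) [IsProbabilityMeasure μ]
    (X Y : Ω → Fin m) (hX : Measurable X) (hY : Measurable Y)
    (hjoint : ∀ i j : Fin m,
      μ {ω | X ω = i ∧ Y ω = j}
        = ENNReal.ofReal (((dstar i : ℝ) / ∑ k, (dstar k : ℝ)) *
            ((dstar j : ℝ) / ∑ k, (dstar k : ℝ)))) :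
    (∫ ω, (dstar (X ω) : ℝ) / (dstar (Y ω) : ℝ) ∂μ
        = (m : ℝ) * ∑ i, ((dstar i : ℝ) / ∑ k, (dstar k : ℝ)) ^ 2) ∧
    (∫ ω, (dstar (X ω) : ℝ) / (dstar (Y ω) : ℝ) ∂μ) /
        (∫ ω, (if X ω = Y ω then (1 : ℝ) else 0) ∂μ) = (m : ℝ) := by
  set D : ℝ := ∑ k, (dstar k : ℝ)
  have hdpos (i : Fin m) : (0 : ℝ) < dstar i := by exact_mod_cast hds i
  have : Nonempty (Fin m) := (nonempty_of_isProbabilityMeasure μ).map X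
  have hDpos : 0 < D := sum_pos (fun i _ => hdpos i) univ_nonempty
  have hlaw (i j : Fin m) : μ.real {ω | X ω = i ∧ Y ω = j} = dstar i / D * (dstar j / D) := by
    rw [measureReal_def, hjoint, ENNReal.toReal_ofReal (by positivity)]
  have hratio : ∫ ω, (dstar (X ω) : ℝ) / (dstar (Y ω) : ℝ) ∂μ
      = m * ∑ i, ((dstar i : ℝ) / D) ^ 2 := by
    rw [integral_comp₂_eq_sum_measureReal hX hY (fun i j => (dstar i : ℝ) / dstar j)]
    simp only [hlaw]
    rw [sum_sum_mul_div_eq_card_mul_sum_sq _ (fun i => (hdpos i).ne'), Fintype.card_fin]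
  have hcollision : ∫ ω, (if X ω = Y ω then (1 : ℝ) else 0) ∂μ
      = ∑ i, ((dstar i : ℝ) / D) ^ 2 := by
    rw [integral_comp₂_eq_sum_measureReal hX hY (fun i j => if i = j then (1 : ℝ) else 0)]
    simp only [hlaw]
    exact sum_sum_mul_ite_eq_sum_sq _
  have hS : 0 < ∑ i, ((dstar i : ℝ) / D) ^ 2 :=
    sum_pos (fun i _ => pow_pos (div_pos (hdpos i) hDpos) 2) univ_nonempty
  refine ⟨hratio, ?_⟩
  rw [hratio, hcollision, mul_div_cancel_right₀ _ hS.ne']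

/-- computation behind Lemma 4.1: the node collision estimator converges
to `n*`.  `V* = {v_1, …, v_{n*}}` is a finite set of `n* = m` nodes, each `v_i` with
public-degree `1 ≤ d_i*` and degree `d_i ≥ d_i*`; `D* = Σ_i d_i*`.  If `X` and `Y` are
independent random nodes each sampled from `π(v_i) = d_i*/D*`, then
`E[d_X*/d_Y*] = n* · Σ_i (d_i*/D*)²`, and consequently
`E[d_X*/d_Y*] / E[1{X = Y}] = n*`. -/
theorem stmt_6 {m : ℕ} (hm : 1 ≤ m) (dstar d : Fin m → ℕ)
    (hds : ∀ i, 1 ≤ dstar i) (hdd : ∀ i, dstar i ≤ d i)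
    {Ω : Type*} [MeasurableSpace Ω] (μ : Measure Ω) [IsProbabilityMeasure μ]
    (X Y : Ω → Fin m) (hX : Measurable X) (hY : Measurable Y)
    (hjoint : ∀ i j : Fin m,
      μ {ω | X ω = i ∧ Y ω = j}
        = ENNReal.ofReal (((dstar i : ℝ) / ∑ k, (dstar k : ℝ)) *
            ((dstar j : ℝ) / ∑ k, (dstar k : ℝ)))) :
    (∫ ω, (dstar (X ω) : ℝ) / (dstar (Y ω) : ℝ) ∂μ
        = (m : ℝ) * ∑ i, ((dstar i : ℝ) / ∑ k, (dstar k : ℝ)) ^ 2) ∧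
    (∫ ω, (dstar (X ω) : ℝ) / (dstar (Y ω) : ℝ) ∂μ) /
        (∫ ω, (if X ω = Y ω then (1 : ℝ) else 0) ∂μ) = (m : ℝ) :=
  stmt_6_general dstar hds μ X Y hX hY hjoint
end

section
/- E_pri[Σ_{v_i∈V*} d_i* d_i] = (1 − p)² · Σ_{v_i∈V} d_i². -/
open Finset

/-- Probability of a particular assignment `ω` of privacy labels, where `ω i = true`
means node `v_i` is private: each node is independently private with probability `p`. -/
noncomputable def priWeight {n : ℕ} (p : ℝ) (ω : Fin n → Bool) : ℝ :=
  ∏ i, if ω i then p else 1 - p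

/-- The (random) set `V*` of public nodes under the labeling `ω`
(modeling the condition that all public nodes belong to the largest public-cluster). -/
def pubNodes {n : ℕ} (ω : Fin n → Bool) : Finset (Fin n) :=
  Finset.univ.filter fun i => ω i = false

/-- The public-degree `d_i*` of node `v_i`: its number of public neighbors. -/
def pubDeg {n : ℕ} (G : SimpleGraph (Fin n)) [DecidableRel G.Adj]
    (ω : Fin n → Bool) (i : Fin n) : ℕ :=
  ((G.neighborFinset i).filter fun j => ω j = false).card

lemma key_lemma {n : ℕ} (p : ℝ) (i j : Fin n) (hij : i ≠ j) :
    ∑ ω : Fin n → Bool, priWeight p ω *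
      ((if ω i = false then (1:ℝ) else 0) * (if ω j = false then (1:ℝ) else 0))
    = (1 - p) ^ 2 := by
  classical
  have hrw : ∀ ω : Fin n → Bool,
      priWeight p ω * ((if ω i = false then (1:ℝ) else 0) * (if ω j = false then (1:ℝ) else 0))
      = ∏ k, ((if ω k then p else 1 - p) *
          ((if k = i then (if ω k then (0:ℝ) else 1) else 1) *
           (if k = j then (if ω k then (0:ℝ) else 1) else 1))) := by
    intro ω
    rw [Finset.prod_mul_distrib, Finset.prod_mul_distrib,
      Finset.prod_ite_eq' Finset.univ i (fun k => if ω k then (0:ℝ) else 1),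
      Finset.prod_ite_eq' Finset.univ j (fun k => if ω k then (0:ℝ) else 1)]
    simp [priWeight]
    cases hωi : ω i <;> cases hωj : ω j <;> simp
  rw [Finset.sum_congr rfl fun ω _ => hrw ω, ← Fintype.prod_sum fun (k : Fin n) (b : Bool) => ((if b then p else 1 - p) *
      ((if k = i then (if b then (0:ℝ) else 1) else 1) *
       (if k = j then (if b then (0:ℝ) else 1) else 1)))]
  have h2 : ∀ k : Fin n, (∑ b : Bool, ((if b then p else 1 - p) *
          ((if k = i then (if b then (0:ℝ) else 1) else 1) *
           (if k = j then (if b then (0:ℝ) else 1) else 1))))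
      = (if k = i then 1 - p else 1) * (if k = j then 1 - p else 1) := by
    intro k
    by_cases h1 : k = i <;> by_cases h2 : k = j <;> simp_all <;> ring
  rw [Finset.prod_congr rfl fun k _ => h2 k, Finset.prod_mul_distrib,
    Finset.prod_ite_eq' Finset.univ i (fun _ => (1-p)),
    Finset.prod_ite_eq' Finset.univ j (fun _ => (1-p))]
  simp [sq]


/-- intermediate expectation in the proof of Theorem 4.6.
`E_pri[Σ_{v_i∈V*} d_i* d_i] = (1 − p)² · Σ_{v_i∈V} d_i²`, where each node of the finite
simple graph `G` is independently private with probability `p ∈ [0,1]`, `V*` is the set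
of public nodes and `d_i*` the public-degree. -/
theorem stmt_12 (n : ℕ) (hn : 1 ≤ n) (G : SimpleGraph (Fin n)) [DecidableRel G.Adj]
    (p : ℝ) (hp0 : 0 ≤ p) (hp1 : p ≤ 1) :
    ∑ ω : Fin n → Bool, priWeight p ω *
        ∑ i ∈ pubNodes ω, (pubDeg G ω i : ℝ) * (G.degree i : ℝ)
      = (1 - p) ^ 2 * ∑ i, (G.degree i : ℝ) ^ 2 := by
  classical
  have h1 : ∀ ω : Fin n → Bool,
      priWeight p ω * ∑ i ∈ pubNodes ω, (pubDeg G ω i : ℝ) * (G.degree i : ℝ)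
      = ∑ i, ∑ j ∈ G.neighborFinset i,
          priWeight p ω * ((if ω i = false then (1:ℝ) else 0) * (if ω j = false then (1:ℝ) else 0))
            * (G.degree i : ℝ) := by
    intro ω
    rw [pubNodes, Finset.sum_filter, Finset.mul_sum]
    refine Finset.sum_congr rfl fun i _ => ?_
    by_cases h : ω i = false
    · simp only [h, if_true]
      have : (pubDeg G ω i : ℝ) = ∑ j ∈ G.neighborFinset i, (if ω j = false then (1:ℝ) else 0) := by
        rw [pubDeg, Finset.card_filter]
        push_cast
        rfl
      rw [this, Finset.sum_mul, Finset.mul_sum]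
      refine Finset.sum_congr rfl fun j _ => ?_
      ring
    · simp [h]
  rw [Finset.sum_congr rfl fun ω _ => h1 ω, Finset.sum_comm]
  have h3 : ∀ i : Fin n, (∑ ω : Fin n → Bool, ∑ j ∈ G.neighborFinset i,
      priWeight p ω * ((if ω i = false then (1:ℝ) else 0) * (if ω j = false then (1:ℝ) else 0))
        * (G.degree i : ℝ)) = (1 - p)^2 * (G.degree i : ℝ)^2 := by
    intro i
    rw [Finset.sum_comm]
    have : ∀ j ∈ G.neighborFinset i, (∑ ω : Fin n → Bool,
        priWeight p ω * ((if ω i = false then (1:ℝ) else 0) * (if ω j = false then (1:ℝ) else 0))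
          * (G.degree i : ℝ)) = (1 - p)^2 * (G.degree i : ℝ) := by
      intro j hj
      have hij : i ≠ j := G.ne_of_adj ((SimpleGraph.mem_neighborFinset _ _ _).1 hj)
      rw [← Finset.sum_mul, key_lemma p i j hij]
    rw [Finset.sum_congr rfl this, Finset.sum_const, SimpleGraph.card_neighborFinset_eq_degree,
      nsmul_eq_mul]
    ring
  rw [Finset.sum_congr rfl fun i _ => h3 i, Finset.mul_sum]
end

section
/- Suppose the graph has at least one edge (so D > 0) and p < 1, and let α_p = (1−p)·Σ_{v_i∈V} d_i² / Σ_{v_i∈V} d_i·[(1−p)·d_i + p]. Then E_pri[n*] · E_pri[Σ_{v_i∈V*} d_i* d_i] / E_pri[Σ_{v_i∈V*} (d_i*)²] = α_p · n. -/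
open Finset

/-- The coefficient `α_p = (1−p)·Σ_i d_i² / Σ_i d_i·[(1−p)·d_i + p]`. -/
noncomputable def alphaP {n : ℕ} (G : SimpleGraph (Fin n)) [DecidableRel G.Adj] (p : ℝ) : ℝ :=
  ((1 - p) * ∑ i, (G.degree i : ℝ) ^ 2) /
    ∑ i, (G.degree i : ℝ) * ((1 - p) * (G.degree i : ℝ) + p)

/-!
Write `d_i* = ∑_{j ∼ i} 1[j public]`. Then each of the three expectations is a sum of
expectations of products of public-indicators, and the product over `k` distinct nodes has
expectation `(1 - p)^k` because the labels are independent. Since a neighbour of `i` differs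
from `i`, this gives `E[n*] = n(1 - p)`, `E[∑_{V*} d_i* d_i] = (1 - p)² ∑ d_i²` and
`E[∑_{V*} (d_i*)²] = (1 - p)² ∑ d_i((1 - p)d_i + p)`, where the diagonal `j = k` of the square
supplies the extra `p`. The common factor `(1 - p)²` cancels in the ratio.
-/

section
variable {n : ℕ}

noncomputable def pubInd (ω : Fin n → Bool) (i : Fin n) : ℝ :=
  if ω i then 0 else 1

lemma pubInd_mul_self (ω : Fin n → Bool) (i : Fin n) :
    pubInd ω i * pubInd ω i = pubInd ω i := by
  unfold pubInd; split_ifs <;> norm_num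

lemma sum_pubNodes_eq_sum_pubInd_mul (ω : Fin n → Bool) (f : Fin n → ℝ) :
    ∑ i ∈ pubNodes ω, f i = ∑ i, pubInd ω i * f i := by
  rw [pubNodes, sum_filter]
  exact sum_congr rfl fun i _ => by by_cases h : ω i <;> simp [pubInd, h]

lemma card_pubNodes_eq_sum_pubInd (ω : Fin n → Bool) :
    ((pubNodes ω).card : ℝ) = ∑ i, pubInd ω i := by
  simpa using sum_pubNodes_eq_sum_pubInd_mul ω 1

lemma pubDeg_eq_sum_pubInd (G : SimpleGraph (Fin n)) [DecidableRel G.Adj]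
    (ω : Fin n → Bool) (i : Fin n) :
    (pubDeg G ω i : ℝ) = ∑ j ∈ G.neighborFinset i, pubInd ω j := by
  rw [pubDeg, card_filter]
  push_cast
  exact sum_congr rfl fun j _ => by by_cases h : ω j <;> simp [pubInd, h]

lemma sum_priWeight_mul_prod_pubInd (p : ℝ) (S : Finset (Fin n)) :
    ∑ ω : Fin n → Bool, priWeight p ω * ∏ k ∈ S, pubInd ω k = (1 - p) ^ S.card := by
  set g : Fin n → Bool → ℝ := fun i b => if b then (if i ∈ S then 0 else p) else 1 - p
  have hfactor (ω : Fin n → Bool) :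
      priWeight p ω * ∏ k ∈ S, pubInd ω k = ∏ i, g i (ω i) := by
    rw [priWeight, ← Fintype.prod_ite_mem S, ← prod_mul_distrib]
    refine prod_congr rfl fun i _ => ?_
    by_cases hi : i ∈ S <;> by_cases h : ω i <;> simp [g, pubInd, hi, h]
  have hcoord (i : Fin n) : ∑ b, g i b = if i ∈ S then 1 - p else 1 := by
    by_cases hi : i ∈ S <;> simp [g, hi]
  simp_rw [hfactor]
  rw [← Fintype.prod_sum, prod_congr rfl fun i _ => hcoord i, Fintype.prod_ite_mem,
    prod_const]

lemma sum_priWeight_mul_pubInd (p : ℝ) (i : Fin n) :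
    ∑ ω : Fin n → Bool, priWeight p ω * pubInd ω i = 1 - p := by
  simpa using sum_priWeight_mul_prod_pubInd p {i}

lemma sum_priWeight_mul_pubInd_mul_pubInd (p : ℝ) {i j : Fin n} (hij : i ≠ j) :
    ∑ ω : Fin n → Bool, priWeight p ω * (pubInd ω i * pubInd ω j) = (1 - p) ^ 2 := by
  simpa [prod_pair hij, card_pair hij] using sum_priWeight_mul_prod_pubInd p {i, j}

lemma sum_priWeight_mul_pubInd_mul_pubInd_mul_pubInd (p : ℝ) {i j k : Fin n} (hij : i ≠ j)
    (hik : i ≠ k) :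
    ∑ ω : Fin n → Bool, priWeight p ω * (pubInd ω i * (pubInd ω j * pubInd ω k)) =
      if j = k then (1 - p) ^ 2 else (1 - p) ^ 3 := by
  split_ifs with hjk
  · subst hjk
    simpa only [pubInd_mul_self] using sum_priWeight_mul_pubInd_mul_pubInd p hij
  · have hijk : i ∉ ({j, k} : Finset (Fin n)) := by simp [hij, hik]
    simpa [prod_insert hijk, prod_pair hjk, card_insert_of_notMem hijk,
      card_pair hjk] using sum_priWeight_mul_prod_pubInd p {i, j, k}

lemma sum_priWeight_mul_card_pubNodes (p : ℝ) :
    ∑ ω : Fin n → Bool, priWeight p ω * ((pubNodes ω).card : ℝ) = n * (1 - p) := by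
  simp_rw [card_pubNodes_eq_sum_pubInd, mul_sum]
  rw [sum_comm]
  simp [sum_priWeight_mul_pubInd, mul_sub]

variable (G : SimpleGraph (Fin n)) [DecidableRel G.Adj]

lemma sum_priWeight_mul_sum_pubDeg_mul_degree (p : ℝ) :
    ∑ ω : Fin n → Bool, priWeight p ω *
        ∑ i ∈ pubNodes ω, (pubDeg G ω i : ℝ) * (G.degree i : ℝ)
      = (1 - p) ^ 2 * ∑ i, (G.degree i : ℝ) ^ 2 := by
  simp_rw [sum_pubNodes_eq_sum_pubInd_mul, pubDeg_eq_sum_pubInd, mul_sum, sum_mul, mul_sum]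
  rw [sum_comm]
  refine sum_congr rfl fun i _ => ?_
  rw [sum_comm]
  have hpair : ∀ j ∈ G.neighborFinset i,
      ∑ ω : Fin n → Bool, priWeight p ω * (pubInd ω i * (pubInd ω j * G.degree i)) =
        (1 - p) ^ 2 * G.degree i := by
    intro j hj
    rw [← sum_priWeight_mul_pubInd_mul_pubInd p (G.ne_of_adj ((G.mem_neighborFinset i j).1 hj)),
      sum_mul]
    exact sum_congr rfl fun ω _ => by ring
  rw [sum_congr rfl hpair, sum_const, G.card_neighborFinset_eq_degree, nsmul_eq_mul]
  ring

lemma sum_priWeight_mul_sum_pubDeg_sq (p : ℝ) :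
    ∑ ω : Fin n → Bool, priWeight p ω * ∑ i ∈ pubNodes ω, (pubDeg G ω i : ℝ) ^ 2
      = (1 - p) ^ 2 * ∑ i, (G.degree i : ℝ) * ((1 - p) * (G.degree i : ℝ) + p) := by
  simp_rw [sum_pubNodes_eq_sum_pubInd_mul, pubDeg_eq_sum_pubInd, sq, sum_mul_sum, mul_sum]
  rw [sum_comm]
  refine sum_congr rfl fun i _ => ?_
  rw [sum_comm]
  have htriple : ∀ j ∈ G.neighborFinset i,
      ∑ ω : Fin n → Bool, ∑ k ∈ G.neighborFinset i,
          priWeight p ω * (pubInd ω i * (pubInd ω j * pubInd ω k)) =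
        (1 - p) ^ 3 * G.degree i + p * (1 - p) ^ 2 := by
    intro j hj
    have hij := G.ne_of_adj ((G.mem_neighborFinset i j).1 hj)
    have hsplit : ∀ k ∈ G.neighborFinset i,
        ∑ ω : Fin n → Bool, priWeight p ω * (pubInd ω i * (pubInd ω j * pubInd ω k)) =
          (1 - p) ^ 3 + if j = k then p * (1 - p) ^ 2 else 0 := by
      intro k hk
      rw [sum_priWeight_mul_pubInd_mul_pubInd_mul_pubInd p hij
        (G.ne_of_adj ((G.mem_neighborFinset i k).1 hk))]
      split_ifs <;> ring
    rw [sum_comm, sum_congr rfl hsplit, sum_add_distrib, sum_const,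
      sum_ite_eq, if_pos hj, G.card_neighborFinset_eq_degree, nsmul_eq_mul]
    ring
  rw [sum_congr rfl htriple, sum_const, G.card_neighborFinset_eq_degree, nsmul_eq_mul]
  ring

end

theorem stmt_14_general (n : ℕ) (G : SimpleGraph (Fin n)) [DecidableRel G.Adj]
    (p : ℝ) (hp1 : p < 1) :
    (∑ ω : Fin n → Bool, priWeight p ω * ((pubNodes ω).card : ℝ)) *
        (∑ ω : Fin n → Bool, priWeight p ω *
          ∑ i ∈ pubNodes ω, (pubDeg G ω i : ℝ) * (G.degree i : ℝ)) /
        (∑ ω : Fin n → Bool, priWeight p ω *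
          ∑ i ∈ pubNodes ω, (pubDeg G ω i : ℝ) ^ 2)
      = alphaP G p * (n : ℝ) := by
  have hq : (1 - p) ^ 2 ≠ 0 := pow_ne_zero 2 (sub_ne_zero.2 hp1.ne')
  rw [sum_priWeight_mul_card_pubNodes, sum_priWeight_mul_sum_pubDeg_mul_degree,
    sum_priWeight_mul_sum_pubDeg_sq, mul_left_comm, mul_div_mul_left _ _ hq, alphaP]
  ring

/-- Theorem 4.6. Suppose the graph has at least one edge (so `D > 0`)
and `p < 1`.  Then, with `α_p = (1−p)·Σ_i d_i² / Σ_i d_i·[(1−p)·d_i + p]`,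
`E_pri[n*] · E_pri[Σ_{v_i∈V*} d_i* d_i] / E_pri[Σ_{v_i∈V*} (d_i*)²] = α_p · n`. -/
theorem stmt_14 (n : ℕ) (hn : 1 ≤ n) (G : SimpleGraph (Fin n)) [DecidableRel G.Adj]
    (p : ℝ) (hp0 : 0 ≤ p) (hp1 : p < 1)
    (hD : 0 < ∑ i, G.degree i) :
    (∑ ω : Fin n → Bool, priWeight p ω * ((pubNodes ω).card : ℝ)) *
        (∑ ω : Fin n → Bool, priWeight p ω *
          ∑ i ∈ pubNodes ω, (pubDeg G ω i : ℝ) * (G.degree i : ℝ)) /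
        (∑ ω : Fin n → Bool, priWeight p ω *
          ∑ i ∈ pubNodes ω, (pubDeg G ω i : ℝ) ^ 2)
      = alphaP G p * (n : ℝ) :=
  stmt_14_general n G p hp1
end

section
/- Suppose every node has degree d_i ≥ 1 (so D > 0), and let α_p = (1−p)·Σ_{v_i∈V} d_i² / Σ_{v_i∈V} d_i·[(1−p)·d_i + p] for p ∈ [0,1]. Then 0 ≤ 1 − α_p ≤ p, and consequently |n − α_p·n| ≤ |n − (1−p)·n|. -/
open Finset

/-- The denominator is a convex combination of `a ≥ b` and `b`, hence at least `b`. -/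
theorem one_sub_mul_div_mem_Icc {a b p : ℝ} (hb : 0 < b) (hba : b ≤ a) (hp0 : 0 ≤ p)
    (hp1 : p ≤ 1) : 1 - (1 - p) * a / ((1 - p) * a + p * b) ∈ Set.Icc 0 p := by
  have hden : b ≤ (1 - p) * a + p * b := by nlinarith
  have hpos : 0 < (1 - p) * a + p * b := hb.trans_le hden
  rw [one_sub_div hpos.ne', add_sub_cancel_left, mul_div_assoc]
  exact ⟨by positivity, mul_le_of_le_one_right hp0 (div_le_one_of_le₀ hden hpos.le)⟩

theorem sum_mul_affine {ι : Type*} (s : Finset ι) (d : ι → ℝ) (p : ℝ) :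
    ∑ i ∈ s, d i * ((1 - p) * d i + p) = (1 - p) * ∑ i ∈ s, d i ^ 2 + p * ∑ i ∈ s, d i := by
  rw [mul_sum, mul_sum, ← sum_add_distrib]
  exact sum_congr rfl fun i _ => by ring

theorem one_sub_weightedRatio_mem_Icc {ι : Type*} [Fintype ι] [Nonempty ι] {d : ι → ℝ}
    (hd : ∀ i, 1 ≤ d i) {p : ℝ} (hp0 : 0 ≤ p) (hp1 : p ≤ 1) :
    1 - ((1 - p) * ∑ i, d i ^ 2) / ∑ i, d i * ((1 - p) * d i + p) ∈ Set.Icc 0 p := by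
  have hsum_pos : 0 < ∑ i, d i := sum_pos (fun i _ => one_pos.trans_le (hd i)) univ_nonempty
  have hsum_le : ∑ i, d i ≤ ∑ i, d i ^ 2 :=
    sum_le_sum fun i _ => le_self_pow₀ (hd i) two_ne_zero
  rw [sum_mul_affine]
  exact one_sub_mul_div_mem_Icc hsum_pos hsum_le hp0 hp1

theorem abs_sub_mul_le_abs_sub_mul {a b : ℝ} (h : |1 - a| ≤ |1 - b|) (x : ℝ) :
    |x - a * x| ≤ |x - b * x| := by
  rw [← one_sub_mul, ← one_sub_mul, abs_mul, abs_mul]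
  exact mul_le_mul_of_nonneg_right h (abs_nonneg x)

/-- Corollary 4.7. Suppose every node of the finite simple graph `G`
on `n ≥ 1` nodes has degree `d_i ≥ 1` (so `D > 0`), and let
`α_p = (1−p)·Σ_i d_i² / Σ_i d_i·[(1−p)·d_i + p]` for `p ∈ [0,1]`.  Then
`0 ≤ 1 − α_p ≤ p`, and consequently `|n − α_p·n| ≤ |n − (1−p)·n|`. -/
theorem stmt_15 (n : ℕ) (hn : 1 ≤ n) (G : SimpleGraph (Fin n)) [DecidableRel G.Adj]
    (p : ℝ) (hp0 : 0 ≤ p) (hp1 : p ≤ 1) (hdeg : ∀ i, 1 ≤ G.degree i) :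
    (0 ≤ 1 - alphaP G p ∧ 1 - alphaP G p ≤ p) ∧
      |(n : ℝ) - alphaP G p * (n : ℝ)| ≤ |(n : ℝ) - (1 - p) * (n : ℝ)| := by
  have : Nonempty (Fin n) := ⟨⟨0, hn⟩⟩
  have hα : 1 - alphaP G p ∈ Set.Icc 0 p :=
    one_sub_weightedRatio_mem_Icc (d := fun i => (G.degree i : ℝ))
      (fun i => by exact_mod_cast hdeg i) hp0 hp1
  refine ⟨hα, abs_sub_mul_le_abs_sub_mul ?_ _⟩
  rw [sub_sub_cancel, abs_of_nonneg hα.1, abs_of_nonneg hp0]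
  exact hα.2
end

section
/- E_pri[D*] = (1 − p)² · D, and consequently, if n ≥ 1 and p < 1, E_pri[D*]/E_pri[n*] = (1 − p)·d_avg. -/
open Finset

/-!
Write `D* = Σ_i Σ_{j ~ i} 1[v_i public] · 1[v_j public]` and `n* = Σ_i 1[v_i public]`.
Since labels are independent, the expectation of a product of indicators over a set `S`
of nodes is `(1 - p) ^ #S`; the neighbours `j ~ i` are distinct from `i`, so each term of
`D*` has expectation `(1 - p)²`, giving `(1 - p)² · D`, while `E[n*] = (1 - p) · n`.
-/

/-- Expectation `E_pri[X]` over the random privacy labels. -/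
noncomputable def priExp {n : ℕ} (p : ℝ) (X : (Fin n → Bool) → ℝ) : ℝ :=
  ∑ ω, priWeight p ω * X ω

def pubIndicator {n : ℕ} (ω : Fin n → Bool) (i : Fin n) : ℝ :=
  if ω i = false then 1 else 0

section Expectation

variable {n : ℕ} (p : ℝ)

lemma priExp_sum {ι : Type*} (s : Finset ι) (X : ι → (Fin n → Bool) → ℝ) :
    priExp p (fun ω => ∑ k ∈ s, X k ω) = ∑ k ∈ s, priExp p (X k) := by
  simp only [priExp, mul_sum]
  exact sum_comm

lemma priExp_prod (f : Fin n → Bool → ℝ) :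
    priExp p (fun ω => ∏ i, f i (ω i)) = ∏ i, (p * f i true + (1 - p) * f i false) := by
  calc priExp p (fun ω => ∏ i, f i (ω i))
      = ∑ ω : Fin n → Bool, ∏ i, (if ω i then p else 1 - p) * f i (ω i) := by
        simp only [priExp, priWeight, prod_mul_distrib]
    _ = ∏ i, ∑ b : Bool, (if b then p else 1 - p) * f i b :=
        (Fintype.prod_sum fun i b => (if b then p else 1 - p) * f i b).symm
    _ = ∏ i, (p * f i true + (1 - p) * f i false) := by simp

lemma priExp_prod_pubIndicator (S : Finset (Fin n)) :
    priExp p (fun ω => ∏ i ∈ S, pubIndicator ω i) = (1 - p) ^ #S := by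
  have hS : ∀ ω : Fin n → Bool, ∏ i ∈ S, pubIndicator ω i
      = ∏ i, if i ∈ S then (if ω i = false then 1 else 0) else 1 := fun ω => by
    rw [prod_ite_mem, univ_inter]
    rfl
  simp only [hS]
  rw [priExp_prod p fun i b => if i ∈ S then (if b = false then 1 else 0) else 1]
  calc ∏ i, (p * (if i ∈ S then (if true = false then 1 else 0) else 1)
          + (1 - p) * (if i ∈ S then (if false = false then 1 else 0) else 1))
      = ∏ i, if i ∈ S then 1 - p else 1 :=
        prod_congr rfl fun i _ => by by_cases hi : i ∈ S <;> simp [hi]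
    _ = (1 - p) ^ #S := by rw [prod_ite_mem, univ_inter, prod_const]

end Expectation

section PublicDegree

variable {n : ℕ} (G : SimpleGraph (Fin n)) [DecidableRel G.Adj] (ω : Fin n → Bool)

lemma card_filter_eq_sum_pubIndicator (s : Finset (Fin n)) :
    ((s.filter fun i => ω i = false).card : ℝ) = ∑ i ∈ s, pubIndicator ω i := by
  rw [card_filter]
  push_cast
  rfl

lemma sum_pubNodes_eq_sum_pubIndicator_mul (x : Fin n → ℝ) :
    ∑ i ∈ pubNodes ω, x i = ∑ i, pubIndicator ω i * x i := by
  rw [pubNodes, sum_filter]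
  exact sum_congr rfl fun i _ => by unfold pubIndicator; split_ifs <;> simp

lemma sum_pubDeg_eq_sum_neighbor_prod_pubIndicator :
    ∑ i ∈ pubNodes ω, (pubDeg G ω i : ℝ)
      = ∑ i, ∑ j ∈ G.neighborFinset i, ∏ k ∈ {i, j}, pubIndicator ω k := by
  rw [sum_pubNodes_eq_sum_pubIndicator_mul]
  refine sum_congr rfl fun i _ => ?_
  rw [pubDeg, card_filter_eq_sum_pubIndicator, mul_sum]
  refine sum_congr rfl fun j hj => ?_
  rw [prod_pair (G.ne_of_adj ((G.mem_neighborFinset i j).mp hj))]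

lemma priExp_sum_pubDeg (p : ℝ) :
    priExp p (fun ω => ∑ i ∈ pubNodes ω, (pubDeg G ω i : ℝ))
      = (1 - p) ^ 2 * ∑ i, (G.degree i : ℝ) := by
  simp only [sum_pubDeg_eq_sum_neighbor_prod_pubIndicator, priExp_sum, mul_sum]
  refine sum_congr rfl fun i _ => ?_
  calc ∑ j ∈ G.neighborFinset i, priExp p (fun ω => ∏ k ∈ {i, j}, pubIndicator ω k)
      = ∑ _j ∈ G.neighborFinset i, (1 - p) ^ 2 := sum_congr rfl fun j hj => by
        rw [priExp_prod_pubIndicator, card_pair (G.ne_of_adj ((G.mem_neighborFinset i j).mp hj))]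
    _ = (1 - p) ^ 2 * G.degree i := by
        rw [sum_const, G.card_neighborFinset_eq_degree, nsmul_eq_mul, mul_comm]

lemma priExp_card_pubNodes (p : ℝ) :
    priExp p (fun ω : Fin n → Bool => ((pubNodes ω).card : ℝ)) = (1 - p) * n := by
  simp only [pubNodes, card_filter_eq_sum_pubIndicator, priExp_sum]
  have hi (i : Fin n) : priExp p (fun ω => pubIndicator ω i) = 1 - p := by
    simpa using priExp_prod_pubIndicator p {i}
  simp only [hi, sum_const, card_univ, Fintype.card_fin, nsmul_eq_mul]
  ring

end PublicDegree

theorem stmt_16_general (n : ℕ) (hn : 1 ≤ n) (G : SimpleGraph (Fin n)) [DecidableRel G.Adj]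
    (p : ℝ) (hp1 : p < 1) :
    (∑ ω : Fin n → Bool, priWeight p ω * ∑ i ∈ pubNodes ω, (pubDeg G ω i : ℝ))
        = (1 - p) ^ 2 * ∑ i, (G.degree i : ℝ) ∧
    (∑ ω : Fin n → Bool, priWeight p ω * ∑ i ∈ pubNodes ω, (pubDeg G ω i : ℝ)) /
        (∑ ω : Fin n → Bool, priWeight p ω * ((pubNodes ω).card : ℝ))
      = (1 - p) * ((∑ i, (G.degree i : ℝ)) / (n : ℝ)) := by
  have hD : priExp p (fun ω => ∑ i ∈ pubNodes ω, (pubDeg G ω i : ℝ))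
      = (1 - p) ^ 2 * ∑ i, (G.degree i : ℝ) := priExp_sum_pubDeg G p
  have hN : priExp p (fun ω => ((pubNodes ω).card : ℝ)) = (1 - p) * n := priExp_card_pubNodes p
  unfold priExp at hD hN
  refine ⟨hD, ?_⟩
  have hp : 1 - p ≠ 0 := by linarith
  have hn' : (n : ℝ) ≠ 0 := Nat.cast_ne_zero.mpr (by omega)
  rw [hD, hN]
  field_simp

/-- Lemma 4.9. `E_pri[D*] = (1 − p)² · D`, where
`D* = Σ_{v_i∈V*} d_i*`, and consequently, since `n ≥ 1` and `p < 1`,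
`E_pri[D*]/E_pri[n*] = (1 − p)·d_avg` where `d_avg = D/n`. -/
theorem stmt_16 (n : ℕ) (hn : 1 ≤ n) (G : SimpleGraph (Fin n)) [DecidableRel G.Adj]
    (p : ℝ) (hp0 : 0 ≤ p) (hp1 : p < 1) :
    (∑ ω : Fin n → Bool, priWeight p ω * ∑ i ∈ pubNodes ω, (pubDeg G ω i : ℝ))
        = (1 - p) ^ 2 * ∑ i, (G.degree i : ℝ) ∧
    (∑ ω : Fin n → Bool, priWeight p ω * ∑ i ∈ pubNodes ω, (pubDeg G ω i : ℝ)) /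
        (∑ ω : Fin n → Bool, priWeight p ω * ((pubNodes ω).card : ℝ))
      = (1 - p) * ((∑ i, (G.degree i : ℝ)) / (n : ℝ)) :=
  stmt_16_general n hn G p hp1
end

section
/- Suppose every node has degree d_i ≥ 1. Then E_pri[Σ_{v_i∈V*} d_i*/d_i] = (1 − p)² · n. -/
open Finset

lemma sum_prod_bool {n : ℕ} (g : Fin n → Bool → ℝ) :
    ∑ ω : Fin n → Bool, ∏ k, g k (ω k) = ∏ k, (g k true + g k false) := by
  classical
  have h := Finset.prod_univ_sum (t := fun _ : Fin n => (Finset.univ : Finset Bool))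
    (f := fun k b => g k b)
  simp only [Fintype.piFinset_univ] at h
  rw [← h]
  apply Finset.prod_congr rfl
  intro k _
  simp [Fintype.sum_bool]

lemma key_expect {n : ℕ} (p : ℝ) {i j : Fin n} (hij : i ≠ j) :
    ∑ ω : Fin n → Bool, priWeight p ω *
      ((if ω i = false then (1:ℝ) else 0) * (if ω j = false then 1 else 0))
    = (1 - p) ^ 2 := by
  classical
  set g : Fin n → Bool → ℝ := fun k b =>
    (if b then p else 1 - p) *
      ((if k = i then (if b = false then (1:ℝ) else 0) else 1) *
       (if k = j then (if b = false then (1:ℝ) else 0) else 1)) with hg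
  have h1 : ∀ ω : Fin n → Bool,
      priWeight p ω * ((if ω i = false then (1:ℝ) else 0) * (if ω j = false then 1 else 0))
      = ∏ k, g k (ω k) := by
    intro ω
    simp only [hg, Finset.prod_mul_distrib]
    rw [Finset.prod_ite_eq' Finset.univ i (fun k => if ω k = false then (1:ℝ) else 0),
        Finset.prod_ite_eq' Finset.univ j (fun k => if ω k = false then (1:ℝ) else 0)]
    simp [priWeight]
  rw [Finset.sum_congr rfl (fun ω _ => h1 ω), sum_prod_bool]
  have h2 : ∀ k : Fin n, g k true + g k false
      = (if k = i then 1 - p else if k = j then 1 - p else 1) := by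
    intro k
    by_cases hki : k = i <;> by_cases hkj : k = j <;>
      simp [hg, hki, hkj] <;> ring
  rw [Finset.prod_congr rfl (fun k _ => h2 k)]
  have hsub : ({i, j} : Finset (Fin n)) ⊆ Finset.univ := Finset.subset_univ _
  rw [← Finset.prod_subset hsub]
  · rw [Finset.prod_pair hij]
    simp [hij, (Ne.symm hij)]
    ring
  · intro x _ hx
    simp only [Finset.mem_insert, Finset.mem_singleton, not_or] at hx
    simp [hx.1, hx.2]

/-- key expectation in the proof of Theorem 4.12. Suppose every node
of the finite simple graph `G` on `n` nodes has degree `d_i ≥ 1`.  Then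
`E_pri[Σ_{v_i∈V*} d_i*/d_i] = (1 − p)² · n`. -/
theorem stmt_17 (n : ℕ) (hn : 1 ≤ n) (G : SimpleGraph (Fin n)) [DecidableRel G.Adj]
    (p : ℝ) (hp0 : 0 ≤ p) (hp1 : p ≤ 1) (hdeg : ∀ i, 1 ≤ G.degree i) :
    ∑ ω : Fin n → Bool, priWeight p ω *
        ∑ i ∈ pubNodes ω, (pubDeg G ω i : ℝ) / (G.degree i : ℝ)
      = (1 - p) ^ 2 * (n : ℝ) := by
  classical
  have hrw : ∀ ω : Fin n → Bool,
      priWeight p ω * ∑ i ∈ pubNodes ω, (pubDeg G ω i : ℝ) / (G.degree i : ℝ)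
      = ∑ i : Fin n, ∑ j ∈ G.neighborFinset i,
          priWeight p ω *
            ((if ω i = false then (1:ℝ) else 0) * (if ω j = false then 1 else 0))
            / (G.degree i : ℝ) := by
    intro ω
    rw [Finset.mul_sum]
    rw [pubNodes, Finset.sum_filter]
    rw [Finset.sum_congr rfl (fun i _ => rfl)]
    apply Finset.sum_congr rfl
    intro i _
    have hd : (pubDeg G ω i : ℝ) = ∑ j ∈ G.neighborFinset i,
        (if ω j = false then (1:ℝ) else 0) := by
      rw [pubDeg, Finset.card_filter]
      push_cast
      rfl
    by_cases h : ω i = false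
    · simp only [h, if_true]
      rw [hd, Finset.sum_div, Finset.mul_sum]
      apply Finset.sum_congr rfl
      intro j _
      ring
    · simp [h, Finset.sum_const_zero]
  rw [Finset.sum_congr rfl (fun ω _ => hrw ω)]
  rw [Finset.sum_comm]
  have hstep : ∀ i : Fin n,
      (∑ j ∈ G.neighborFinset i, ∑ ω : Fin n → Bool,
        priWeight p ω *
          ((if ω i = false then (1:ℝ) else 0) * (if ω j = false then 1 else 0))
          / (G.degree i : ℝ)) = (1 - p) ^ 2 := by
    intro i
    have hdi : (G.degree i : ℝ) ≠ 0 := by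
      have := hdeg i; positivity
    have : ∀ j ∈ G.neighborFinset i,
        (∑ ω : Fin n → Bool,
          priWeight p ω *
            ((if ω i = false then (1:ℝ) else 0) * (if ω j = false then 1 else 0))
            / (G.degree i : ℝ)) = (1 - p) ^ 2 / (G.degree i : ℝ) := by
      intro j hj
      have hij : i ≠ j := by
        intro h; subst h
        exact G.irrefl ((SimpleGraph.mem_neighborFinset G i i).mp hj)
      rw [← Finset.sum_div, key_expect p hij]
    rw [Finset.sum_congr rfl this, Finset.sum_const, SimpleGraph.card_neighborFinset_eq_degree,
        nsmul_eq_mul]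
    field_simp
  have h3 : ∀ i : Fin n,
      (∑ ω : Fin n → Bool, ∑ j ∈ G.neighborFinset i,
        priWeight p ω *
          ((if ω i = false then (1:ℝ) else 0) * (if ω j = false then 1 else 0))
          / (G.degree i : ℝ)) = (1 - p) ^ 2 := by
    intro i
    rw [Finset.sum_comm]
    exact hstep i
  rw [Finset.sum_congr rfl (fun i _ => h3 i)]
  simp [mul_comm]
end

section
/- Suppose every node has degree d_i ≥ 1 and p < 1. Then E_pri[D*] / E_pri[Σ_{v_i∈V*} d_i*/d_i] = d_avg. -/
open Finset

lemma pair_lemma {n : ℕ} (p : ℝ) (i j : Fin n) (hij : i ≠ j) :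
    ∑ ω : Fin n → Bool, priWeight p ω *
      ((if ω i = false then (1:ℝ) else 0) * (if ω j = false then 1 else 0))
    = (1 - p) ^ 2 := by
  have h1 : ∀ ω : Fin n → Bool,
      priWeight p ω * ((if ω i = false then (1:ℝ) else 0) * (if ω j = false then 1 else 0))
      = ∏ k, ((if ω k then p else 1 - p) *
          ((if k = i then (if ω k = false then (1:ℝ) else 0) else 1) *
           (if k = j then (if ω k = false then (1:ℝ) else 0) else 1))) := by
    intro ω
    rw [Finset.prod_mul_distrib, Finset.prod_mul_distrib, Finset.prod_ite_eq',
        Finset.prod_ite_eq']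
    simp [priWeight]
  simp only [h1]
  have h2 : ∑ ω ∈ Fintype.piFinset (fun _ : Fin n => (Finset.univ : Finset Bool)),
      ∏ k, ((if ω k then p else 1 - p) *
          ((if k = i then (if ω k = false then (1:ℝ) else 0) else 1) *
           (if k = j then (if ω k = false then (1:ℝ) else 0) else 1)))
      = ∏ k, ∑ b : Bool, ((if b then p else 1 - p) *
          ((if k = i then (if b = false then (1:ℝ) else 0) else 1) *
           (if k = j then (if b = false then (1:ℝ) else 0) else 1))) :=
    (Finset.prod_univ_sum (fun _ : Fin n => (Finset.univ : Finset Bool))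
      (fun k b => ((if b then p else 1 - p) *
          ((if k = i then (if b = false then (1:ℝ) else 0) else 1) *
           (if k = j then (if b = false then (1:ℝ) else 0) else 1))))).symm
  rw [Fintype.piFinset_univ] at h2
  rw [h2]
  have h3 : ∀ k : Fin n, (∑ b : Bool, ((if b then p else 1 - p) *
          ((if k = i then (if b = false then (1:ℝ) else 0) else 1) *
           (if k = j then (if b = false then (1:ℝ) else 0) else 1))))
      = (if k = i then 1 - p else 1) * (if k = j then 1 - p else 1) := by
    intro k
    by_cases hki : k = i <;> by_cases hkj : k = j
    · exact absurd (hki ▸ hkj ▸ rfl : i = j) (by simpa using hij)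
    all_goals simp [hki, hkj, hij, Ne.symm hij, Fintype.sum_bool]
  simp only [h3]
  rw [Finset.prod_mul_distrib, Finset.prod_ite_eq', Finset.prod_ite_eq']
  simp [sq]

lemma expect_lin {n : ℕ} (G : SimpleGraph (Fin n)) [DecidableRel G.Adj]
    (p : ℝ) (c : Fin n → ℝ) :
    ∑ ω : Fin n → Bool, priWeight p ω * ∑ i ∈ pubNodes ω, (pubDeg G ω i : ℝ) * c i
    = (1 - p) ^ 2 * ∑ i, (G.degree i : ℝ) * c i := by
  have step1 : ∀ ω : Fin n → Bool,
      ∑ i ∈ pubNodes ω, (pubDeg G ω i : ℝ) * c i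
      = ∑ i, ∑ j ∈ G.neighborFinset i,
          ((if ω i = false then (1:ℝ) else 0) * (if ω j = false then 1 else 0)) * c i := by
    intro ω
    rw [pubNodes, Finset.sum_filter]
    refine Finset.sum_congr rfl fun i _ => ?_
    by_cases hi : ω i = false
    · have hd : (pubDeg G ω i : ℝ) = ∑ j ∈ G.neighborFinset i,
          (if ω j = false then (1:ℝ) else 0) := by
        rw [pubDeg, Finset.card_filter]
        push_cast
        simp
      simp only [hi, if_true]
      rw [hd, Finset.sum_mul]
      refine Finset.sum_congr rfl fun j _ => ?_
      ring
    · simp [hi]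
  simp only [step1, Finset.mul_sum]
  rw [Finset.sum_comm]
  have step2 : ∀ i : Fin n,
      ∑ j ∈ G.neighborFinset i, ∑ ω : Fin n → Bool,
        priWeight p ω * (((if ω i = false then (1:ℝ) else 0) *
          (if ω j = false then 1 else 0)) * c i)
      = (G.degree i : ℝ) * ((1 - p) ^ 2 * c i) := by
    intro i
    have key : ∀ j ∈ G.neighborFinset i,
        (∑ ω : Fin n → Bool, priWeight p ω * (((if ω i = false then (1:ℝ) else 0) *
          (if ω j = false then 1 else 0)) * c i)) = (1 - p) ^ 2 * c i := by
      intro j hj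
      have hij : i ≠ j := G.ne_of_adj ((G.mem_neighborFinset i j).mp hj)
      calc ∑ ω : Fin n → Bool, priWeight p ω * (((if ω i = false then (1:ℝ) else 0) *
              (if ω j = false then 1 else 0)) * c i)
          = (∑ ω : Fin n → Bool, priWeight p ω * ((if ω i = false then (1:ℝ) else 0) *
              (if ω j = false then 1 else 0))) * c i := by
            rw [Finset.sum_mul]; exact Finset.sum_congr rfl fun ω _ => by ring
        _ = (1 - p) ^ 2 * c i := by rw [pair_lemma p i j hij]
    rw [Finset.sum_congr rfl key, Finset.sum_const, SimpleGraph.card_neighborFinset_eq_degree,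
        nsmul_eq_mul]
  refine Finset.sum_congr rfl fun i _ => ?_
  rw [Finset.sum_comm, step2 i]; ring

/-- Theorem 4.12. Suppose every node of the finite simple graph `G`
on `n ≥ 1` nodes has degree `d_i ≥ 1` and `p < 1`.  Then
`E_pri[D*] / E_pri[Σ_{v_i∈V*} d_i*/d_i] = d_avg`, where `D* = Σ_{v_i∈V*} d_i*` and
`d_avg = D/n`. -/
theorem stmt_18 (n : ℕ) (hn : 1 ≤ n) (G : SimpleGraph (Fin n)) [DecidableRel G.Adj]
    (p : ℝ) (hp0 : 0 ≤ p) (hp1 : p < 1) (hdeg : ∀ i, 1 ≤ G.degree i) :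
    (∑ ω : Fin n → Bool, priWeight p ω * ∑ i ∈ pubNodes ω, (pubDeg G ω i : ℝ)) /
        (∑ ω : Fin n → Bool, priWeight p ω *
          ∑ i ∈ pubNodes ω, (pubDeg G ω i : ℝ) / (G.degree i : ℝ))
      = (∑ i, (G.degree i : ℝ)) / (n : ℝ) := by
  have hnum : (∑ ω : Fin n → Bool, priWeight p ω * ∑ i ∈ pubNodes ω, (pubDeg G ω i : ℝ))
      = (1 - p) ^ 2 * ∑ i, (G.degree i : ℝ) := by
    have := expect_lin G p (fun _ => (1:ℝ))
    simpa using this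
  have hden : (∑ ω : Fin n → Bool, priWeight p ω *
        ∑ i ∈ pubNodes ω, (pubDeg G ω i : ℝ) / (G.degree i : ℝ))
      = (1 - p) ^ 2 * (n : ℝ) := by
    have h := expect_lin G p (fun i => ((G.degree i : ℝ))⁻¹)
    simp only [div_eq_mul_inv]
    rw [h]
    congr 1
    have : ∀ i : Fin n, (G.degree i : ℝ) * ((G.degree i : ℝ))⁻¹ = 1 := by
      intro i
      have : (G.degree i : ℝ) ≠ 0 := by
        have := hdeg i; positivity
      field_simp
    rw [Finset.sum_congr rfl fun i _ => this i]
    simp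
  rw [hnum, hden]
  have hne : (1 - p) ^ 2 ≠ 0 := by
    have : 0 < 1 - p := by linarith
    positivity
  rw [mul_div_mul_left _ _ hne]
end
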